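/- Let v be the monomial valuation on ℂ[x,y,z] with weights (3,2,1). If ψ = x² + y³ + η(y,z), where η has order of vanishing at 0 at least 4 and contains no monomials y·zˡ with l ≤ 3 and no monomials zˡ with l ≤ 5, then v(ψ) = 6, and hence (3+2+1−1)/v(ψ) = 5/6. -/

import Mathlib

/-! The monomial `x²` has weight `6` and survives in `ψ`: having no `y` and no `z`, it cannot
occur in `η`. Every other monomial of `ψ` is `y³` or a monomial `xᵃyᵇzᶜ` of `η`, and the
conditions on `η` force `3a + 2b + c ≥ 6`. -/

open MvPolynomial

/-- The monomial valuation with weight vector `w`: minimum of the `w`-weighted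
degree over monomials with nonzero coefficient. -/
noncomputable def wval {n : ℕ} (w : Fin n → ℕ) (ψ : MvPolynomial (Fin n) ℂ) : ℕ :=
  (ψ.support.inf fun m => (∑ i, w i * m i : ℕ∞)).toNat

theorem wval_eq_of_mem_support {n : ℕ} {w : Fin n → ℕ} {ψ : MvPolynomial (Fin n) ℂ} {d : ℕ}
    {m₀ : Fin n →₀ ℕ} (hm₀ : m₀ ∈ ψ.support) (hd : ∑ i, w i * m₀ i = d)
    (hle : ∀ m ∈ ψ.support, d ≤ ∑ i, w i * m i) : wval w ψ = d := by
  have hinf : (ψ.support.inf fun m => (∑ i, w i * m i : ℕ∞)) = d := by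
    refine le_antisymm ?_ (Finset.le_inf fun m hm => ?_)
    · calc _ ≤ (∑ i, w i * m₀ i : ℕ∞) :=
            Finset.inf_le (f := fun m => (∑ i, w i * m i : ℕ∞)) hm₀
        _ = d := by exact_mod_cast hd
    · exact_mod_cast hle m hm
  rw [wval, hinf, ENat.toNat_natCast]

theorem mem_support_X_pow_add_X_pow_add {σ R : Type*} [CommSemiring R] {i j : σ} {k l : ℕ}
    {η : MvPolynomial σ R} {m : σ →₀ ℕ} (hm : m ∈ (X i ^ k + X j ^ l + η).support) :
    m = Finsupp.single i k ∨ m = Finsupp.single j l ∨ m ∈ η.support := by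
  classical
  rcases Finset.mem_union.mp (support_add hm) with hm | hη
  · rcases Finset.mem_union.mp (support_add hm) with hi | hj
    · rw [X_pow_eq_monomial] at hi
      exact .inl (Finset.mem_singleton.mp (support_monomial_subset hi))
    · rw [X_pow_eq_monomial] at hj
      exact .inr (.inl (Finset.mem_singleton.mp (support_monomial_subset hj)))
  · exact .inr (.inr hη)

theorem stmt2_general (η : MvPolynomial (Fin 3) ℂ)
    (hord : ∀ m ∈ η.support, 4 ≤ m 1 + m 2)
    (hyz : ∀ m ∈ η.support, ¬(m 1 = 1 ∧ m 2 ≤ 3))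
    (hz : ∀ m ∈ η.support, ¬(m 1 = 0 ∧ m 2 ≤ 5)) :
    wval ![3,2,1] (X 0 ^ 2 + X 1 ^ 3 + η) = 6 ∧
      ((3 + 2 + 1 : ℚ) - 1) / (wval ![3,2,1] (X 0 ^ 2 + X 1 ^ 3 + η)) = 5 / 6 := by
  have hx2 : Finsupp.single 0 2 ∉ η.support := fun h => hz _ h (by simp)
  have hval : wval ![3,2,1] (X 0 ^ 2 + X 1 ^ 3 + η) = 6 := by
    refine wval_eq_of_mem_support (m₀ := Finsupp.single 0 2) ?_ ?_ fun m hm => ?_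
    · rw [mem_support_iff, coeff_add, coeff_add, coeff_X_pow, coeff_X_pow,
        notMem_support_iff.mp hx2]
      simp [Finsupp.single_eq_single_iff]
    · simp [Fin.sum_univ_three]
    · simp only [Fin.sum_univ_three, Matrix.cons_val_zero, Matrix.cons_val_one,
        Matrix.cons_val_two, Matrix.head_cons, Matrix.tail_cons]
      rcases mem_support_X_pow_add_X_pow_add hm with rfl | rfl | hη
      · simp
      · simp
      · have hord' := hord m hη
        have hyz' := hyz m hη
        have hz' := hz m hη
        omega
  exact ⟨hval, by rw [hval]; norm_num⟩

theorem stmt2 (η : MvPolynomial (Fin 3) ℂ)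
    (hx : ∀ m ∈ η.support, m 0 = 0)
    (hord : ∀ m ∈ η.support, 4 ≤ m 1 + m 2)
    (hyz : ∀ m ∈ η.support, ¬(m 1 = 1 ∧ m 2 ≤ 3))
    (hz : ∀ m ∈ η.support, ¬(m 1 = 0 ∧ m 2 ≤ 5)) :
    wval ![3,2,1] (X 0 ^ 2 + X 1 ^ 3 + η) = 6 ∧
      ((3 + 2 + 1 : ℚ) - 1) / (wval ![3,2,1] (X 0 ^ 2 + X 1 ^ 3 + η)) = 5 / 6 :=
  stmt2_general η hord hyz hz
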